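/- Bernstein two-regime tail integral bound: let U_1,…,U_n be i.i.d. centered random variables with |U_i| ≤ 1/n and Var(U_i) ≤ q/n². Then for all p ≥ 2, E[|Σ U_i|^p] = p ∫_0^∞ t^{p−1} P(|Σ U_i| ≥ t) dt ≤ 2p [ (1/2)(3q/n)^{p/2} Γ(p/2) + (2/n)^p Γ(p, nq/4) ], where Γ(s,x) is the upper incomplete Gamma function. -/

import Mathlib

open Real MeasureTheory ProbabilityTheory

/-- The upper incomplete Gamma function `Γ(s,x) = ∫_x^∞ t^{s-1} e^{-t} dt`. -/
noncomputable def upperGamma (s x : ℝ) : ℝ := ∫ t in Set.Ioi x, t ^ (s - 1) * Real.exp (-t)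

/-!
Each summand satisfies `E e^{λU} ≤ exp(3λ²q/(4n²))` for `0 ≤ λ ≤ n`, from `e^x ≤ 1 + x + 3x²/4` on
`|x| ≤ 1`, so the Chernoff bound gives the tail `P(|ΣU| ≥ t) ≤ 2 exp(-λt + 3λ²q/(4n))`. Taking
`λ = 2nt/(3q)` for `t ≤ 3q/2` and `λ = n` beyond yields a Gaussian tail `2 exp(-nt²/(3q))` and an
exponential tail `2 exp(-nt/2)`. Feeding these into the layer-cake formula, the two pieces integrate
to a Gamma function and an upper incomplete Gamma function.
-/

open Set

theorem Real.exp_le_one_add_add_three_quarters_mul_sq {x : ℝ} (hx : |x| ≤ 1) :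
    exp x ≤ 1 + x + 3 / 4 * x ^ 2 := by
  have h := (abs_le.1 (exp_bound hx (n := 2) two_pos)).2
  norm_num [Finset.sum_range_succ, Nat.factorial, sq_abs] at h
  linarith

section Moments

variable {Ω : Type*} [MeasurableSpace Ω] {μ : Measure Ω}

theorem integrable_exp_mul_of_ae_abs_le [IsFiniteMeasure μ] {X : Ω → ℝ} {b : ℝ}
    (hX : AEMeasurable X μ) (hbdd : ∀ᵐ ω ∂μ, |X ω| ≤ b) (l : ℝ) :
    Integrable (fun ω => exp (l * X ω)) μ := by
  refine .of_bound (hX.const_mul l).exp.aestronglyMeasurable (exp (|l| * b)) ?_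
  filter_upwards [hbdd] with ω h
  rw [norm_eq_abs, abs_exp, exp_le_exp]
  exact (le_abs_self _).trans (by rw [abs_mul]; gcongr)

theorem mgf_le_exp_of_ae_abs_le [IsProbabilityMeasure μ] {X : Ω → ℝ} {b v l : ℝ}
    (hX : AEMeasurable X μ) (hcent : ∫ ω, X ω ∂μ = 0) (hbdd : ∀ᵐ ω ∂μ, |X ω| ≤ b)
    (hvar : ∫ ω, X ω ^ 2 ∂μ ≤ v) (hlb : |l| * b ≤ 1) :
    mgf X μ l ≤ exp (3 / 4 * l ^ 2 * v) := by
  have hX_int : Integrable X μ :=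
    .of_bound hX.aestronglyMeasurable b (hbdd.mono fun ω h => by rwa [norm_eq_abs])
  have hX2_int : Integrable (fun ω => X ω ^ 2) μ :=
    .of_bound (hX.pow_const 2).aestronglyMeasurable (b ^ 2) (hbdd.mono fun ω h => by
      rw [norm_eq_abs, abs_pow]; exact pow_le_pow_left₀ (abs_nonneg _) h 2)
  have hquad : ∀ᵐ ω ∂μ, exp (l * X ω) ≤ 1 + l * X ω + 3 / 4 * l ^ 2 * X ω ^ 2 := by
    filter_upwards [hbdd] with ω h
    have hlX : |l * X ω| ≤ 1 := by
      rw [abs_mul]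
      exact (by gcongr : |l| * |X ω| ≤ |l| * b).trans hlb
    exact (exp_le_one_add_add_three_quarters_mul_sq hlX).trans_eq (by ring)
  have hlin_int : Integrable (fun ω => 1 + l * X ω) μ :=
    (integrable_const 1).add (hX_int.const_mul l)
  calc mgf X μ l ≤ ∫ ω, 1 + l * X ω + 3 / 4 * l ^ 2 * X ω ^ 2 ∂μ :=
        integral_mono_ae (integrable_exp_mul_of_ae_abs_le hX hbdd l)
          (hlin_int.add (hX2_int.const_mul _)) hquad
    _ = 1 + 3 / 4 * l ^ 2 * ∫ ω, X ω ^ 2 ∂μ := by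
        rw [integral_add hlin_int (hX2_int.const_mul _),
          integral_add (integrable_const 1) (hX_int.const_mul l), integral_const_mul,
          integral_const_mul, hcent]
        simp
    _ ≤ 1 + 3 / 4 * l ^ 2 * v := by gcongr
    _ ≤ exp (3 / 4 * l ^ 2 * v) := by linarith [add_one_le_exp (3 / 4 * l ^ 2 * v)]

end Moments

section Bernstein

variable {Ω ι : Type*} [MeasurableSpace Ω] {μ : Measure Ω} {V : ι → Ω → ℝ} {b v s : ℝ}

structure IndepCenteredBounded (μ : Measure Ω) (V : ι → Ω → ℝ) (b v : ℝ) : Prop where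
  measurable : ∀ i, Measurable (V i)
  indep : iIndepFun V μ
  integral_eq_zero : ∀ i, ∫ ω, V i ω ∂μ = 0
  ae_abs_le : ∀ i, ∀ᵐ ω ∂μ, |V i ω| ≤ b
  integral_sq_le : ∀ i, ∫ ω, V i ω ^ 2 ∂μ ≤ v

namespace IndepCenteredBounded

theorem neg (h : IndepCenteredBounded μ V b v) :
    IndepCenteredBounded μ (fun i ω => -V i ω) b v where
  measurable i := (h.measurable i).neg
  indep := h.indep.comp (fun _ x => -x) fun _ => measurable_neg
  integral_eq_zero i := by rw [integral_neg, h.integral_eq_zero i, neg_zero]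
  ae_abs_le i := (h.ae_abs_le i).mono fun ω hω => by rwa [abs_neg]
  integral_sq_le i := by simpa using h.integral_sq_le i

theorem measureReal_sum_ge_le [Fintype ι] (h : IndepCenteredBounded μ V b v) {l : ℝ}
    (hl : 0 ≤ l) (hlb : l * b ≤ 1) (t : ℝ) :
    μ.real {ω | t ≤ ∑ i, V i ω} ≤ exp (-l * t + 3 / 4 * l ^ 2 * (Fintype.card ι * v)) := by
  have := h.indep.isProbabilityMeasure
  have hint : Integrable (fun ω => exp (l * (∑ i, V i) ω)) μ :=
    h.indep.integrable_exp_mul_sum h.measurable fun i _ =>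
      integrable_exp_mul_of_ae_abs_le (h.measurable i).aemeasurable (h.ae_abs_le i) l
  have hmgf : mgf (∑ i, V i) μ l ≤ exp (3 / 4 * l ^ 2 * (Fintype.card ι * v)) := by
    rw [h.indep.mgf_sum h.measurable]
    calc ∏ i, mgf (V i) μ l ≤ ∏ _i : ι, exp (3 / 4 * l ^ 2 * v) :=
          Finset.prod_le_prod (fun _ _ => mgf_nonneg) fun i _ =>
            mgf_le_exp_of_ae_abs_le (h.measurable i).aemeasurable (h.integral_eq_zero i)
              (h.ae_abs_le i) (h.integral_sq_le i) (by rwa [abs_of_nonneg hl])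
      _ = exp (3 / 4 * l ^ 2 * (Fintype.card ι * v)) := by
          rw [Finset.prod_const, ← exp_nat_mul, Finset.card_univ]
          ring_nf
  calc μ.real {ω | t ≤ ∑ i, V i ω} = μ.real {ω | t ≤ (∑ i, V i) ω} := by
        simp only [Finset.sum_apply]
    _ ≤ exp (-l * t) * mgf (∑ i, V i) μ l := measure_ge_le_exp_mul_mgf t hl hint
    _ ≤ exp (-l * t) * exp (3 / 4 * l ^ 2 * (Fintype.card ι * v)) := by gcongr
    _ = _ := (exp_add _ _).symm

theorem measureReal_abs_sum_ge_le [Fintype ι] (h : IndepCenteredBounded μ V b v) {l : ℝ}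
    (hl : 0 ≤ l) (hlb : l * b ≤ 1) (t : ℝ) :
    μ.real {ω | t ≤ |∑ i, V i ω|}
      ≤ 2 * exp (-l * t + 3 / 4 * l ^ 2 * (Fintype.card ι * v)) := by
  have := h.indep.isProbabilityMeasure
  have hupper := h.measureReal_sum_ge_le hl hlb t
  have hlower := h.neg.measureReal_sum_ge_le hl hlb t
  simp only [Finset.sum_neg_distrib] at hlower
  calc μ.real {ω | t ≤ |∑ i, V i ω|}
      ≤ μ.real ({ω | t ≤ ∑ i, V i ω} ∪ {ω | t ≤ -∑ i, V i ω}) :=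
        measureReal_mono fun ω (hω : t ≤ |∑ i, V i ω|) => le_abs.1 hω
    _ ≤ _ := (measureReal_union_le _ _).trans (by linarith)

theorem measureReal_abs_sum_ge_le_exp_neg_sq_div [Fintype ι]
    (h : IndepCenteredBounded μ V b v) (hb : 0 < b) (hs : 0 < s)
    (hvs : Fintype.card ι * v ≤ s) {t : ℝ} (ht : 0 ≤ t) (htT : t ≤ 3 * s / (2 * b)) :
    μ.real {ω | t ≤ |∑ i, V i ω|} ≤ 2 * exp (-(t ^ 2 / (3 * s))) := by
  have hlb : 2 * t / (3 * s) * b ≤ 1 := by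
    rw [le_div_iff₀ (by positivity)] at htT
    rw [div_mul_eq_mul_div, div_le_one (by positivity)]
    linarith
  refine (h.measureReal_abs_sum_ge_le (by positivity) hlb t).trans ?_
  gcongr
  calc -(2 * t / (3 * s)) * t + 3 / 4 * (2 * t / (3 * s)) ^ 2 * (Fintype.card ι * v)
      ≤ -(2 * t / (3 * s)) * t + 3 / 4 * (2 * t / (3 * s)) ^ 2 * s := by gcongr
    _ = -(t ^ 2 / (3 * s)) := by field_simp; ring

theorem measureReal_abs_sum_ge_le_exp_neg_div [Fintype ι]
    (h : IndepCenteredBounded μ V b v) (hb : 0 < b) (hvs : Fintype.card ι * v ≤ s) {t : ℝ}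
    (hTt : 3 * s / (2 * b) < t) :
    μ.real {ω | t ≤ |∑ i, V i ω|} ≤ 2 * exp (-(t / (2 * b))) := by
  refine (h.measureReal_abs_sum_ge_le (inv_nonneg.2 hb.le) (inv_mul_cancel₀ hb.ne').le t).trans
    ?_
  rw [div_lt_iff₀ (by positivity)] at hTt
  gcongr
  calc -b⁻¹ * t + 3 / 4 * b⁻¹ ^ 2 * (Fintype.card ι * v)
      ≤ -b⁻¹ * t + 3 / 4 * b⁻¹ ^ 2 * s := by gcongr
    _ ≤ -(t / (2 * b)) := by
        field_simp
        nlinarith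

end IndepCenteredBounded

end Bernstein

section GammaIntegrals

theorem integral_Ioi_rpow_mul_exp_neg_sq_div {a p : ℝ} (ha : 0 < a) (hp : 0 < p) :
    ∫ t in Ioi 0, t ^ (p - 1) * exp (-(t ^ 2 / a)) = 1 / 2 * a ^ (p / 2) * Gamma (p / 2) := by
  have h := integral_rpow_mul_exp_neg_mul_rpow two_pos (by linarith : -1 < p - 1) (inv_pos.2 ha)
  rw [show -(p - 1 + 1) / 2 = -(p / 2) by ring, show (p - 1 + 1) / 2 = p / 2 by ring,
    inv_rpow ha.le, ← rpow_neg ha.le, neg_neg] at h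
  rw [mul_comm (1 / 2 : ℝ), ← h]
  refine setIntegral_congr_fun measurableSet_Ioi fun t _ => ?_
  simp only [rpow_two, neg_mul, inv_mul_eq_div]

theorem integrableOn_Ioi_rpow_mul_exp_neg_sq_div {a p : ℝ} (ha : 0 < a) (hp : 0 < p) :
    IntegrableOn (fun t => t ^ (p - 1) * exp (-(t ^ 2 / a))) (Ioi 0) := by
  refine (integrableOn_rpow_mul_exp_neg_mul_sq (inv_pos.2 ha)
    (by linarith : -1 < p - 1)).congr_fun (fun t _ => ?_) measurableSet_Ioi
  simp only [neg_mul, inv_mul_eq_div]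

theorem integral_Ioi_rpow_mul_exp_neg_div {β T p : ℝ} (hβ : 0 < β) (hT : 0 ≤ T) :
    ∫ t in Ioi T, t ^ (p - 1) * exp (-(t / β)) = β ^ p * upperGamma p (T / β) :=
  calc ∫ t in Ioi T, t ^ (p - 1) * exp (-(t / β))
      = ∫ t in Ioi T, β ^ (p - 1) * ((β⁻¹ * t) ^ (p - 1) * exp (-(β⁻¹ * t))) :=
        setIntegral_congr_fun measurableSet_Ioi fun t ht => by
          rw [mul_rpow (inv_nonneg.2 hβ.le) (hT.trans ht.le), inv_rpow hβ.le, ← mul_assoc,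
            ← mul_assoc, mul_inv_cancel₀ (rpow_pos_of_pos hβ _).ne', one_mul, inv_mul_eq_div]
    _ = β ^ (p - 1) * (β * upperGamma p (T / β)) := by
        rw [integral_const_mul, integral_comp_mul_left_Ioi (fun u => u ^ (p - 1) * exp (-u)) T
          (inv_pos.2 hβ), inv_inv, smul_eq_mul, inv_mul_eq_div]
        rfl
    _ = β ^ p * upperGamma p (T / β) := by
        rw [← mul_assoc, ← rpow_add_one hβ.ne', sub_add_cancel]

theorem integrableOn_Ioi_rpow_mul_exp_neg_div {β T p : ℝ} (hβ : 0 < β) (hT : 0 ≤ T)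
    (hp : 0 < p) :
    IntegrableOn (fun t => t ^ (p - 1) * exp (-(t / β))) (Ioi T) := by
  refine ((integrableOn_rpow_mul_exp_neg_mul_rpow (by linarith : -1 < p - 1) one_pos
    (inv_pos.2 hβ)).mono_set (Ioi_subset_Ioi hT)).congr_fun (fun t _ => ?_) measurableSet_Ioi
  simp only [rpow_one, neg_mul, inv_mul_eq_div]

theorem upperGamma_le_upperGamma {s x y : ℝ} (hs : 0 < s) (hx : 0 ≤ x) (hxy : x ≤ y) :
    upperGamma s y ≤ upperGamma s x := by
  have hint : IntegrableOn (fun t => t ^ (s - 1) * exp (-t)) (Ioi x) :=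
    ((GammaIntegral_convergent hs).mono_set (Ioi_subset_Ioi hx)).congr_fun
      (fun t _ => mul_comm _ _) measurableSet_Ioi
  refine setIntegral_mono_set hint ?_ (Ioi_subset_Ioi hxy).eventuallyLE
  filter_upwards [ae_restrict_mem measurableSet_Ioi] with t ht
  exact mul_nonneg (rpow_nonneg (hx.trans ht.le) _) (exp_nonneg _)

end GammaIntegrals

theorem integral_Ioi_rpow_mul_le_of_two_regimes {F : ℝ → ℝ} {p C a β T : ℝ} (hp : 0 < p)
    (hC : 0 ≤ C) (ha : 0 < a) (hβ : 0 < β) (hT : 0 ≤ T) (hF : ∀ t ∈ Ioi 0, 0 ≤ F t)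
    (h_small : ∀ t ∈ Ioc 0 T, F t ≤ C * exp (-(t ^ 2 / a)))
    (h_large : ∀ t ∈ Ioi T, F t ≤ C * exp (-(t / β))) :
    ∫ t in Ioi 0, t ^ (p - 1) * F t
      ≤ C * (1 / 2 * a ^ (p / 2) * Gamma (p / 2) + β ^ p * upperGamma p (T / β)) := by
  set g₁ : ℝ → ℝ := fun t => t ^ (p - 1) * exp (-(t ^ 2 / a))
  set g₂ : ℝ → ℝ := fun t => t ^ (p - 1) * exp (-(t / β))
  have hg₂ : Integrable ((Ioi T).indicator g₂) (volume.restrict (Ioi 0)) :=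
    ((integrableOn_Ioi_rpow_mul_exp_neg_div hβ hT hp).integrable_indicator
      measurableSet_Ioi).restrict
  have hpointwise :
      ∀ t ∈ Ioi (0 : ℝ), t ^ (p - 1) * F t ≤ C * (g₁ t + (Ioi T).indicator g₂ t) := by
    intro t ht
    have ht0 : 0 < t := ht
    have hg₂_nonneg : 0 ≤ (Ioi T).indicator g₂ t := indicator_nonneg
      (fun u hu => mul_nonneg (rpow_nonneg (hT.trans (le_of_lt hu)) _) (exp_nonneg _)) t
    rcases le_or_gt t T with htT | hTt
    · calc t ^ (p - 1) * F t ≤ t ^ (p - 1) * (C * exp (-(t ^ 2 / a))) :=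
            mul_le_mul_of_nonneg_left (h_small t ⟨ht0, htT⟩) (rpow_nonneg ht0.le _)
        _ = C * g₁ t := by simp only [g₁]; ring
        _ ≤ C * (g₁ t + (Ioi T).indicator g₂ t) := by gcongr; linarith
    · have hg₁_nonneg : 0 ≤ g₁ t := mul_nonneg (rpow_nonneg ht0.le _) (exp_nonneg _)
      calc t ^ (p - 1) * F t ≤ t ^ (p - 1) * (C * exp (-(t / β))) :=
            mul_le_mul_of_nonneg_left (h_large t hTt) (rpow_nonneg ht0.le _)
        _ = C * (Ioi T).indicator g₂ t := by
            rw [indicator_of_mem (show t ∈ Ioi T from hTt)]; simp only [g₂]; ring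
        _ ≤ C * (g₁ t + (Ioi T).indicator g₂ t) := by gcongr; linarith
  calc ∫ t in Ioi 0, t ^ (p - 1) * F t
      ≤ ∫ t in Ioi 0, C * (g₁ t + (Ioi T).indicator g₂ t) := by
        refine integral_mono_of_nonneg ?_
          (((integrableOn_Ioi_rpow_mul_exp_neg_sq_div ha hp).add hg₂).const_mul C) ?_
        · exact ae_restrict_of_forall_mem measurableSet_Ioi fun t ht =>
            mul_nonneg (rpow_nonneg (le_of_lt ht) _) (hF t ht)
        · exact ae_restrict_of_forall_mem measurableSet_Ioi hpointwise
    _ = C * ((∫ t in Ioi 0, g₁ t) + ∫ t in Ioi T, g₂ t) := by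
        rw [integral_const_mul, integral_add (integrableOn_Ioi_rpow_mul_exp_neg_sq_div ha hp) hg₂,
          setIntegral_indicator measurableSet_Ioi, Ioi_inter_Ioi, max_eq_right hT]
    _ = _ := by
        rw [integral_Ioi_rpow_mul_exp_neg_sq_div ha hp, integral_Ioi_rpow_mul_exp_neg_div hβ hT]

theorem integral_rpow_eq_mul_integral_rpow_mul_meas_le {α : Type*} [MeasurableSpace α]
    {μ : Measure α} [IsFiniteMeasure μ] {f : α → ℝ} (f_nn : 0 ≤ᵐ[μ] f)
    (f_mble : AEMeasurable f μ) {p : ℝ} (hp : 0 < p) :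
    ∫ ω, f ω ^ p ∂μ = p * ∫ t in Ioi 0, t ^ (p - 1) * μ.real {ω | t ≤ f ω} := by
  have h_tail : Measurable fun t : ℝ => μ.real {ω | t ≤ f ω} :=
    Antitone.measurable fun t₁ t₂ ht => measureReal_mono fun ω hω => ht.trans hω
  rw [integral_eq_lintegral_of_nonneg_ae (f_nn.mono fun ω h => rpow_nonneg h p)
      (f_mble.pow_const p).aestronglyMeasurable,
    lintegral_rpow_eq_lintegral_meas_le_mul μ f_nn f_mble hp, ENNReal.toReal_mul,
    ENNReal.toReal_ofReal hp.le,
    integral_eq_lintegral_of_nonneg_ae (ae_restrict_of_forall_mem measurableSet_Ioi fun t ht =>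
      mul_nonneg (rpow_nonneg (le_of_lt ht) _) measureReal_nonneg)
      (((measurable_id'.pow_const (p - 1)).mul h_tail).aestronglyMeasurable)]
  congr 2
  refine setLIntegral_congr_fun measurableSet_Ioi fun t ht => ?_
  rw [ENNReal.ofReal_mul (rpow_nonneg (le_of_lt ht) _), ofReal_measureReal, mul_comm]

theorem bernstein_tail_integral_bound_general {Ω : Type*} [MeasurableSpace Ω]
    (μ : Measure Ω) [IsProbabilityMeasure μ] (n : ℕ) (hn : 0 < n)
    (q : ℝ) (hq : 0 < q) (U : Fin n → Ω → ℝ)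
    (hmeas : ∀ i, Measurable (U i))
    (hindep : iIndepFun U μ)
    (hcent : ∀ i, ∫ ω, U i ω ∂μ = 0)
    (hbdd : ∀ i, ∀ᵐ ω ∂μ, |U i ω| ≤ 1 / n)
    (hvar : ∀ i, ∫ ω, (U i ω) ^ 2 ∂μ ≤ q / (n : ℝ) ^ 2)
    (p : ℝ) (hp : 2 ≤ p) :
    (∫ ω, |∑ i, U i ω| ^ p ∂μ)
        = p * ∫ t in Set.Ioi (0:ℝ), t ^ (p - 1) * (μ {ω | t ≤ |∑ i, U i ω|}).toReal ∧
    ∫ ω, |∑ i, U i ω| ^ p ∂μ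
        ≤ 2 * p * ((1 / 2) * (3 * q / n) ^ (p / 2) * Real.Gamma (p / 2)
            + (2 / n) ^ p * upperGamma p (n * q / 4)) := by
  have hn' : (0 : ℝ) < n := Nat.cast_pos.2 hn
  have hU : IndepCenteredBounded μ U (1 / n) (q / n ^ 2) := ⟨hmeas, hindep, hcent, hbdd, hvar⟩
  have hvar_sum : (Fintype.card (Fin n) : ℝ) * (q / n ^ 2) ≤ q / n :=
    le_of_eq (by rw [Fintype.card_fin]; field_simp)
  have hlayer := integral_rpow_eq_mul_integral_rpow_mul_meas_le (μ := μ)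
    (f := fun ω => |∑ i, U i ω|) (ae_of_all _ fun ω => abs_nonneg _)
    (by fun_prop) (by linarith : 0 < p)
  refine ⟨hlayer, hlayer ▸ ?_⟩
  have htail := integral_Ioi_rpow_mul_le_of_two_regimes
    (F := fun t => μ.real {ω | t ≤ |∑ i, U i ω|}) (by linarith : 0 < p) zero_le_two
    (by positivity : 0 < 3 * (q / n))
    (by positivity : 0 < 2 * (1 / n : ℝ)) (by positivity : 0 ≤ 3 * (q / n) / (2 * (1 / n)))
    (fun t _ => measureReal_nonneg)
    (fun t ht => hU.measureReal_abs_sum_ge_le_exp_neg_sq_div (by positivity) (by positivity)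
      hvar_sum ht.1.le ht.2)
    (fun t ht => hU.measureReal_abs_sum_ge_le_exp_neg_div (by positivity) hvar_sum ht)
  have hthreshold : n * q / 4 ≤ 3 * (q / n) / (2 * (1 / n)) / (2 * (1 / n)) := by
    field_simp
    nlinarith
  rw [mul_div_assoc 3 q, ← mul_one_div 2 (n : ℝ), mul_assoc 2 p, mul_left_comm]
  gcongr
  refine htail.trans ?_
  gcongr
  exact upperGamma_le_upperGamma (by linarith) (by positivity) hthreshold

/-- Bernstein two-regime tail integral bound for sums of bounded i.i.d. centered variables. -/
theorem bernstein_tail_integral_bound {Ω : Type*} [MeasurableSpace Ω]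
    (μ : Measure Ω) [IsProbabilityMeasure μ] (n : ℕ) (hn : 0 < n)
    (q : ℝ) (hq : 0 < q) (U : Fin n → Ω → ℝ)
    (hmeas : ∀ i, Measurable (U i))
    (hindep : iIndepFun U μ)
    (hident : ∀ i j, IdentDistrib (U i) (U j) μ μ)
    (hcent : ∀ i, ∫ ω, U i ω ∂μ = 0)
    (hbdd : ∀ i, ∀ᵐ ω ∂μ, |U i ω| ≤ 1 / n)
    (hvar : ∀ i, ∫ ω, (U i ω) ^ 2 ∂μ ≤ q / (n : ℝ) ^ 2)
    (p : ℝ) (hp : 2 ≤ p) :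
    (∫ ω, |∑ i, U i ω| ^ p ∂μ)
        = p * ∫ t in Set.Ioi (0:ℝ), t ^ (p - 1) * (μ {ω | t ≤ |∑ i, U i ω|}).toReal ∧
    ∫ ω, |∑ i, U i ω| ^ p ∂μ
        ≤ 2 * p * ((1 / 2) * (3 * q / n) ^ (p / 2) * Real.Gamma (p / 2)
            + (2 / n) ^ p * upperGamma p (n * q / 4)) :=
  bernstein_tail_integral_bound_general μ n hn q hq U hmeas hindep hcent hbdd hvar p hp
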